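/- Let A be a Hermitian d×d complex matrix and ρ a d×d density matrix. Then ρ commutes with A, i.e. ρA = Aρ, if and only if there exists a pure-state decomposition ρ = ∑ₖ pₖ |ψₖ⟩⟨ψₖ| (pₖ ≥ 0, ∑ₖ pₖ = 1, ψₖ unit vectors) whose average variance vanishes: ∑ₖ pₖ (ΔA)²_{ψₖ} = 0, where (ΔA)²_ψ = ⟨ψ, A²ψ⟩ − ⟨ψ, Aψ⟩². Equivalently, ρ commutes with A exactly when ρ admits a pure-state decomposition in which every ψₖ is an eigenvector of A. (Since the quantum Fisher information is the convex roof of four times the variance, this is the statement F_Q[ρ,A] = 0 ⟺ [ρ,A] = 0.) -/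

import Mathlib

open Matrix BigOperators
open scoped ComplexOrder

/-- A density matrix: positive semidefinite with unit trace. -/
def IsDensity {d : ℕ} (ρ : Matrix (Fin d) (Fin d) ℂ) : Prop :=
  ρ.PosSemidef ∧ ρ.trace = 1

/-- The rank-one projection |ψ⟩⟨ψ|. -/
def ketbra {d : ℕ} (ψ : Fin d → ℂ) : Matrix (Fin d) (Fin d) ℂ :=
  Matrix.vecMulVec ψ (star ψ)

/-- Pure-state variance (ΔA)²_ψ = ⟨ψ, A²ψ⟩ − ⟨ψ, Aψ⟩². -/
noncomputable def pureVar {d : ℕ} (A : Matrix (Fin d) (Fin d) ℂ) (ψ : Fin d → ℂ) : ℝ :=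
  (star ψ ⬝ᵥ (A * A).mulVec ψ).re - ((star ψ ⬝ᵥ A.mulVec ψ).re) ^ 2

/-! If `ρ` commutes with `A`, the two Hermitian matrices have a common orthonormal eigenbasis;
expanding `ρ` in it writes `ρ` as a mixture of eigenvectors of `A`, each of zero variance.
Conversely, for a unit vector `ψ` the variance is `‖Aψ - ⟨ψ, Aψ⟩ψ‖²`, so in a decomposition with
zero average variance every `ψₖ` of positive weight is an eigenvector of `A` with a real eigenvalue,
and then `|ψₖ⟩⟨ψₖ|` commutes with `A`. -/

lemma Matrix.IsHermitian.ofReal_re_star_dotProduct_mulVec {n : Type*} [Fintype n]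
    {A : Matrix n n ℂ} (hA : A.IsHermitian) (x : n → ℂ) :
    ((star x ⬝ᵥ A *ᵥ x).re : ℂ) = star x ⬝ᵥ A *ᵥ x :=
  Complex.ext rfl (by simpa using (hA.im_star_dotProduct_mulVec_self x).symm)

lemma Matrix.PosSemidef.nonneg_of_mulVec_eq {n : Type*} [Fintype n] {ρ : Matrix n n ℂ}
    (hρ : ρ.PosSemidef) {ψ : n → ℂ} (hψ : star ψ ⬝ᵥ ψ = 1) {r : ℝ}
    (h : ρ *ᵥ ψ = (r : ℂ) • ψ) : 0 ≤ r := by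
  have := hρ.dotProduct_mulVec_nonneg ψ
  rwa [h, dotProduct_smul, hψ, smul_eq_mul, mul_one, Complex.zero_le_real] at this

lemma OrthonormalBasis.star_dotProduct_self {ι n : Type*} [Fintype ι] [Fintype n]
    (b : OrthonormalBasis ι ℂ (EuclideanSpace ℂ n)) (i : ι) : star (b i : n → ℂ) ⬝ᵥ b i = 1 := by
  rw [dotProduct_comm, ← EuclideanSpace.inner_eq_star_dotProduct, inner_self_eq_norm_sq_to_K,
    b.orthonormal.1 i]
  simp

open Module.End in
theorem LinearMap.IsSymmetric.exists_orthonormalBasis_eigenvectors_of_commute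
    {𝕜 E : Type*} [RCLike 𝕜] [NormedAddCommGroup E] [InnerProductSpace 𝕜 E]
    [FiniteDimensional 𝕜 E] {n : ℕ} (hn : Module.finrank 𝕜 E = n) {T S : E →ₗ[𝕜] E}
    (hT : T.IsSymmetric) (hS : S.IsSymmetric) (hTS : Commute T S) :
    ∃ (b : OrthonormalBasis (Fin n) 𝕜 E) (μ ν : Fin n → ℝ),
      ∀ i, T (b i) = (μ i : 𝕜) • b i ∧ S (b i) = (ν i : 𝕜) • b i := by
  classical
  let V : 𝕜 × 𝕜 → Submodule 𝕜 E := fun i => eigenspace T i.2 ⊓ eigenspace S i.1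
  have hV := hT.directSum_isInternal_of_commute hS hTS
  -- Only finitely many joint eigenspaces are nonzero; restrict to those to get a finite index.
  have : Fintype {i // V i ≠ ⊥} :=
    ((DirectSum.isInternal_submodule_iff_iSupIndep_and_iSup_eq_top V).mp hV).1
      |>.fintypeNeBotOfFiniteDimensional
  have hV' := DirectSum.isInternal_ne_bot_iff.mpr hV
  have hOrth := (hT.orthogonalFamily_eigenspace_inf_eigenspace hS).comp
    (Subtype.val_injective : Function.Injective (Subtype.val : {i // V i ≠ ⊥} → 𝕜 × 𝕜))
  let b := hV'.subordinateOrthonormalBasis hn hOrth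
  let idx := fun a => (hV'.subordinateOrthonormalBasisIndex hn a hOrth).val
  have hmem : ∀ a, b a ∈ V (idx a) := fun a =>
    hV'.subordinateOrthonormalBasis_subordinate hn a hOrth
  refine ⟨b, fun a => RCLike.re (idx a).2, fun a => RCLike.re (idx a).1, fun a => ?_⟩
  have hb : b a ≠ 0 := b.orthonormal.ne_zero a
  obtain ⟨hTb, hSb⟩ := Submodule.mem_inf.mp (hmem a)
  have hTreal := hT.conj_eigenvalue_eq_self (hasEigenvalue_of_hasEigenvector ⟨hTb, hb⟩)
  have hSreal := hS.conj_eigenvalue_eq_self (hasEigenvalue_of_hasEigenvector ⟨hSb, hb⟩)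
  rw [RCLike.conj_eq_iff_re] at hTreal hSreal
  rw [hTreal, hSreal]
  exact ⟨mem_eigenspace_iff.mp hTb, mem_eigenspace_iff.mp hSb⟩

theorem Matrix.IsHermitian.exists_orthonormalBasis_eigenvectors_of_commute {𝕜 n : Type*}
    [RCLike 𝕜] [Fintype n] [DecidableEq n] {A B : Matrix n n 𝕜} (hA : A.IsHermitian)
    (hB : B.IsHermitian) (hAB : Commute A B) :
    ∃ (b : OrthonormalBasis (Fin (Fintype.card n)) 𝕜 (EuclideanSpace 𝕜 n))
      (μ ν : Fin (Fintype.card n) → ℝ),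
      ∀ i, A *ᵥ b i = (μ i : 𝕜) • b i ∧ B *ᵥ b i = (ν i : 𝕜) • b i := by
  have hLin : Commute (toEuclideanLin A) (toEuclideanLin B) :=
    hAB.map (toLinAlgEquiv (PiLp.basisFun 2 𝕜 n))
  obtain ⟨b, μ, ν, h⟩ :=
    (isSymmetric_toEuclideanLin_iff.mpr hA).exists_orthonormalBasis_eigenvectors_of_commute
      finrank_euclideanSpace (isSymmetric_toEuclideanLin_iff.mpr hB) hLin
  exact ⟨b, μ, ν, fun i => ⟨congrArg WithLp.ofLp (h i).1, congrArg WithLp.ofLp (h i).2⟩⟩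

section Ketbra

variable {d : ℕ}

lemma ketbra_mulVec (ψ v : Fin d → ℂ) : ketbra ψ *ᵥ v = (star ψ ⬝ᵥ v) • ψ := by
  rw [ketbra, vecMulVec_mulVec, op_smul_eq_smul]

lemma trace_ketbra (ψ : Fin d → ℂ) : (ketbra ψ).trace = star ψ ⬝ᵥ ψ := by
  rw [ketbra, trace_vecMulVec, dotProduct_comm]

lemma sum_ketbra_orthonormalBasis {ι : Type*} [Fintype ι]
    (b : OrthonormalBasis ι ℂ (EuclideanSpace ℂ (Fin d))) : ∑ i, ketbra (b i) = 1 := by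
  refine ext_of_mulVec_single fun j => ?_
  rw [one_mulVec, sum_mulVec]
  simp_rw [ketbra_mulVec]
  simpa [EuclideanSpace.inner_eq_star_dotProduct, dotProduct_comm] using
    congrArg WithLp.ofLp (b.sum_repr' (WithLp.toLp 2 (Pi.single j 1)))

lemma eq_sum_smul_ketbra_of_mulVec_eq {ι : Type*} [Fintype ι]
    (b : OrthonormalBasis ι ℂ (EuclideanSpace ℂ (Fin d))) {M : Matrix (Fin d) (Fin d) ℂ}
    {ν : ι → ℂ} (h : ∀ i, M *ᵥ b i = ν i • b i) : M = ∑ i, ν i • ketbra (b i) := by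
  conv_lhs => rw [← mul_one M, ← sum_ketbra_orthonormalBasis b, Finset.mul_sum]
  refine Finset.sum_congr rfl fun i _ => ?_
  rw [ketbra, mul_vecMulVec, h i, smul_vecMulVec]

lemma commute_ketbra_of_mulVec_eq {A : Matrix (Fin d) (Fin d) ℂ} (hA : A.IsHermitian)
    {ψ : Fin d → ℂ} {r : ℝ} (h : A *ᵥ ψ = (r : ℂ) • ψ) : Commute A (ketbra ψ) := by
  have hstar : star ψ ᵥ* A = (r : ℂ) • star ψ := by
    rw [← hA.eq, ← star_mulVec, h, star_smul, Complex.star_def, Complex.conj_ofReal]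
  rw [Commute, SemiconjBy, ketbra, mul_vecMulVec, vecMulVec_mul, h, hstar, smul_vecMulVec,
    vecMulVec_smul]

end Ketbra

section Variance

variable {d : ℕ} {A : Matrix (Fin d) (Fin d) ℂ} {ψ : Fin d → ℂ}

lemma pureVar_eq_zero_of_mulVec_eq (hψ : star ψ ⬝ᵥ ψ = 1) {r : ℝ}
    (h : A *ᵥ ψ = (r : ℂ) • ψ) : pureVar A ψ = 0 := by
  have h2 : (A * A) *ᵥ ψ = ((r ^ 2 : ℝ) : ℂ) • ψ := by
    rw [← mulVec_mulVec, h, mulVec_smul, h, smul_smul]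
    push_cast
    ring_nf
  rw [pureVar, h, h2, dotProduct_smul, dotProduct_smul, hψ, smul_eq_mul, smul_eq_mul, mul_one,
    mul_one, Complex.ofReal_re, Complex.ofReal_re, sub_self]

lemma pureVar_eq_star_dotProduct_self (hA : A.IsHermitian) (hψ : star ψ ⬝ᵥ ψ = 1) :
    (pureVar A ψ : ℂ) = star (A *ᵥ ψ - (star ψ ⬝ᵥ A *ᵥ ψ) • ψ) ⬝ᵥ
      (A *ᵥ ψ - (star ψ ⬝ᵥ A *ᵥ ψ) • ψ) := by
  rw [pureVar]
  set a := star ψ ⬝ᵥ A *ᵥ ψ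
  set q := star ψ ⬝ᵥ (A * A) *ᵥ ψ
  have hAA : (A * A).IsHermitian := by simpa [hA.eq] using isHermitian_mul_conjTranspose_self A
  have ha : (a.re : ℂ) = a := hA.ofReal_re_star_dotProduct_mulVec ψ
  have hq : (q.re : ℂ) = q := hAA.ofReal_re_star_dotProduct_mulVec ψ
  have hAψA : star (A *ᵥ ψ) ⬝ᵥ A *ᵥ ψ = q := by
    rw [star_mulVec, hA.eq, ← dotProduct_mulVec, mulVec_mulVec]
  have hAψ : star (A *ᵥ ψ) ⬝ᵥ ψ = a := by
    rw [star_mulVec, hA.eq, ← dotProduct_mulVec]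
  have hstar_a : star a = a := by rw [← ha, Complex.star_def, Complex.conj_ofReal]
  simp only [star_sub, star_smul, sub_dotProduct, dotProduct_sub, smul_dotProduct,
    dotProduct_smul, smul_eq_mul, hAψA, hAψ, hψ, hstar_a]
  push_cast
  rw [hq, ha]
  ring

lemma pureVar_nonneg (hA : A.IsHermitian) (hψ : star ψ ⬝ᵥ ψ = 1) : 0 ≤ pureVar A ψ := by
  have h := dotProduct_star_self_nonneg (A *ᵥ ψ - (star ψ ⬝ᵥ A *ᵥ ψ) • ψ)
  rwa [← pureVar_eq_star_dotProduct_self hA hψ, Complex.zero_le_real] at h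

lemma mulVec_eq_of_pureVar_eq_zero (hA : A.IsHermitian) (hψ : star ψ ⬝ᵥ ψ = 1)
    (h : pureVar A ψ = 0) : A *ᵥ ψ = ((star ψ ⬝ᵥ A *ᵥ ψ).re : ℂ) • ψ := by
  have hdev := pureVar_eq_star_dotProduct_self hA hψ
  rw [h, Complex.ofReal_zero, eq_comm, dotProduct_star_self_eq_zero, sub_eq_zero] at hdev
  rwa [hA.ofReal_re_star_dotProduct_mulVec]

end Variance

/-- `ρ` commutes with `A` iff `ρ` admits a pure-state decomposition with vanishing
average variance (i.e. the quantum Fisher information of `ρ` with generator `A` vanishes). -/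
theorem stmt_4 {d : ℕ}
    (A : Matrix (Fin d) (Fin d) ℂ) (hA : A.IsHermitian)
    (ρ : Matrix (Fin d) (Fin d) ℂ) (hρ : IsDensity ρ) :
    ρ * A = A * ρ ↔
      ∃ (m : ℕ) (p : Fin m → ℝ) (ψ : Fin m → (Fin d → ℂ)),
        (∀ k, 0 ≤ p k) ∧ (∑ k, p k) = 1 ∧
        (∀ k, star (ψ k) ⬝ᵥ ψ k = 1) ∧
        ρ = (∑ k, p k • ketbra (ψ k)) ∧
        (∑ k, p k * pureVar A (ψ k)) = 0 := by
  constructor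
  · intro hcomm
    obtain ⟨b, μ, ν, hb⟩ :=
      hA.exists_orthonormalBasis_eigenvectors_of_commute hρ.1.1 (Commute.symm hcomm)
    have hunit : ∀ i, star (b i : Fin d → ℂ) ⬝ᵥ b i = 1 := b.star_dotProduct_self
    have hρ_eq : ρ = ∑ i, ν i • ketbra (b i) := by
      conv_lhs => rw [eq_sum_smul_ketbra_of_mulVec_eq b fun i => (hb i).2]
      exact Finset.sum_congr rfl fun i _ => Complex.coe_smul _ _
    refine ⟨_, ν, fun i => b i, fun i => hρ.1.nonneg_of_mulVec_eq (hunit i) (hb i).2, ?_, hunit,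
      hρ_eq, by simp [pureVar_eq_zero_of_mulVec_eq (hunit _) (hb _).1]⟩
    have htrace := hρ.2
    simp only [hρ_eq, trace_sum, trace_smul, trace_ketbra, hunit, Complex.real_smul,
      mul_one] at htrace
    exact_mod_cast htrace
  · rintro ⟨m, p, ψ, hp, -, hψ, rfl, hvar⟩
    have hterm : ∀ k, p k * pureVar A (ψ k) = 0 := fun k =>
      (Finset.sum_eq_zero_iff_of_nonneg fun k _ =>
        mul_nonneg (hp k) (pureVar_nonneg hA (hψ k))).mp hvar k (Finset.mem_univ k)
    refine Commute.symm (Commute.sum_right _ _ _ fun k _ => ?_)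
    rcases mul_eq_zero.mp (hterm k) with hpk | hvark
    · simp [hpk]
    · exact (commute_ketbra_of_mulVec_eq hA
        (mulVec_eq_of_pureVar_eq_zero hA (hψ k) hvark)).smul_right _
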